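/- Let 0 < ε < 1 and let g₀ > 0 be the unique positive real satisfying g₀·Q(g₀/√(2π)) = (1 − ε)·exp(−g₀²/(4π)). Then for every x ≥ g₀/√(2π): √(2π)·x ≤ exp(−x²/2)/Q(x) ≤ √(2π)·x/(1 − ε). -/

import Mathlib

/-!
Write `R x = exp (x²/2) ∫ₓ^∞ exp (-u²/2) du` for Mills' ratio, so that `exp (-x²/2) / Q x = √(2π) / R x`
and the equation defining `g₀` says `y₀ R y₀ = 1 - ε` at `y₀ = g₀ / √(2π)`. Integrating
`u exp (-u²/2)` and `(1 + u⁻²) exp (-u²/2)` over `(x, ∞)` gives Mills' bounds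
`x / (1 + x²) ≤ R x ≤ 1 / x`. Since `R' = x R - 1`, the derivative of `x R x` is
`(1 + x²) R x - x ≥ 0`, so `x R x` is nondecreasing; hence `1 - ε ≤ x R x ≤ 1` for `x ≥ y₀`.
-/

open MeasureTheory Real

/-- The standard Gaussian tail probability `Q x = (1/√(2π)) ∫ₓ^∞ exp(-u²/2) du`. -/
noncomputable def Q (x : ℝ) : ℝ :=
  (Real.sqrt (2 * π))⁻¹ * ∫ u in Set.Ioi x, Real.exp (-u^2/2)

open Set Filter Topology

lemma integrable_exp_neg_sq_div_two : Integrable fun u : ℝ => exp (-u ^ 2 / 2) := by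
  convert integrable_exp_neg_mul_sq (by norm_num : (0 : ℝ) < 1 / 2) using 2 with u
  ring_nf

lemma tendsto_exp_neg_sq_div_two_atTop :
    Tendsto (fun u : ℝ => exp (-u ^ 2 / 2)) atTop (𝓝 0) := by
  refine tendsto_exp_atBot.comp ?_
  simpa only [neg_div] using tendsto_neg_atBot_iff.2
    ((tendsto_pow_atTop two_ne_zero).atTop_div_const two_pos)

lemma hasDerivAt_exp_neg_sq_div_two (u : ℝ) :
    HasDerivAt (fun u : ℝ => exp (-u ^ 2 / 2)) (-u * exp (-u ^ 2 / 2)) u := by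
  have h : HasDerivAt (fun u : ℝ => -u ^ 2 / 2) (-u) u :=
    ((hasDerivAt_pow 2 u).fun_neg.div_const 2).congr_deriv (by ring)
  convert h.exp using 1; ring

noncomputable def gaussianTail (x : ℝ) : ℝ := ∫ u in Ioi x, exp (-u ^ 2 / 2)

lemma sqrt_two_pi_mul_Q (x : ℝ) : √(2 * π) * Q x = gaussianTail x := by
  rw [Q, ← mul_assoc, mul_inv_cancel₀ (by positivity), one_mul, gaussianTail]

lemma gaussianTail_pos (x : ℝ) : 0 < gaussianTail x := by
  rw [gaussianTail, setIntegral_pos_iff_support_of_nonneg_ae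
    (.of_forall fun u => (exp_pos _).le) integrable_exp_neg_sq_div_two.integrableOn]
  rw [Function.support_eq_univ fun u => (exp_pos _).ne', univ_inter]
  exact Measure.measure_Ioi_pos (volume : Measure ℝ) x

lemma hasDerivAt_gaussianTail (x : ℝ) :
    HasDerivAt gaussianTail (-exp (-x ^ 2 / 2)) x := by
  have h : gaussianTail = fun x => gaussianTail 0 - ∫ u in (0 : ℝ)..x, exp (-u ^ 2 / 2) := by
    ext x
    rw [gaussianTail, gaussianTail, ← intervalIntegral.integral_Ioi_sub_Ioi'
      integrable_exp_neg_sq_div_two.integrableOn integrable_exp_neg_sq_div_two.integrableOn]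
    ring
  rw [h]
  exact ((Continuous.integral_hasStrictDerivAt (by fun_prop) 0 x).hasDerivAt).const_sub _

lemma integral_Ioi_mul_exp_neg_sq_div_two {x : ℝ} (hx : 0 ≤ x) :
    IntegrableOn (fun u => u * exp (-u ^ 2 / 2)) (Ioi x) ∧
      ∫ u in Ioi x, u * exp (-u ^ 2 / 2) = exp (-x ^ 2 / 2) := by
  have hderiv : ∀ u ∈ Ici x,
      HasDerivAt (fun u : ℝ => -exp (-u ^ 2 / 2)) (u * exp (-u ^ 2 / 2)) u :=
    fun u _ => (hasDerivAt_exp_neg_sq_div_two u).neg.congr_deriv (by ring)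
  have hnonneg : ∀ u ∈ Ioi x, 0 ≤ u * exp (-u ^ 2 / 2) :=
    fun u hu => mul_nonneg (hx.trans hu.le) (exp_pos _).le
  have hlim := tendsto_exp_neg_sq_div_two_atTop.neg
  rw [neg_zero] at hlim
  refine ⟨integrableOn_Ioi_deriv_of_nonneg' hderiv hnonneg hlim, ?_⟩
  simpa using integral_Ioi_of_hasDerivAt_of_nonneg' hderiv hnonneg hlim

lemma integral_Ioi_one_add_inv_sq_mul_exp_neg_sq_div_two {x : ℝ} (hx : 0 < x) :
    IntegrableOn (fun u => (1 + u⁻¹ ^ 2) * exp (-u ^ 2 / 2)) (Ioi x) ∧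
      ∫ u in Ioi x, (1 + u⁻¹ ^ 2) * exp (-u ^ 2 / 2) = exp (-x ^ 2 / 2) / x := by
  have hderiv : ∀ u ∈ Ici x, HasDerivAt (fun u : ℝ => -(exp (-u ^ 2 / 2) * u⁻¹))
      ((1 + u⁻¹ ^ 2) * exp (-u ^ 2 / 2)) u := by
    intro u hu
    have hu0 : u ≠ 0 := (hx.trans_le hu).ne'
    refine ((hasDerivAt_exp_neg_sq_div_two u).mul (hasDerivAt_inv hu0)).neg.congr_deriv ?_
    field_simp
    ring
  have hnonneg : ∀ u ∈ Ioi x, 0 ≤ (1 + u⁻¹ ^ 2) * exp (-u ^ 2 / 2) :=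
    fun u _ => by positivity
  have hlim := (tendsto_exp_neg_sq_div_two_atTop.mul tendsto_inv_atTop_zero).neg
  rw [mul_zero, neg_zero] at hlim
  refine ⟨integrableOn_Ioi_deriv_of_nonneg' hderiv hnonneg hlim, ?_⟩
  rw [integral_Ioi_of_hasDerivAt_of_nonneg' hderiv hnonneg hlim]
  ring

lemma mul_gaussianTail_le (x : ℝ) : x * gaussianTail x ≤ exp (-x ^ 2 / 2) := by
  rcases le_or_gt x 0 with hx | hx
  · exact (mul_nonpos_of_nonpos_of_nonneg hx (gaussianTail_pos x).le).trans (exp_pos _).le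
  obtain ⟨hint, hval⟩ := integral_Ioi_mul_exp_neg_sq_div_two hx.le
  rw [gaussianTail, ← integral_const_mul, ← hval]
  exact setIntegral_mono_on (integrable_exp_neg_sq_div_two.integrableOn.const_mul x) hint
    measurableSet_Ioi fun u hu => mul_le_mul_of_nonneg_right (le_of_lt hu) (exp_pos _).le

lemma mul_exp_le_one_add_sq_mul_gaussianTail (x : ℝ) :
    x * exp (-x ^ 2 / 2) ≤ (1 + x ^ 2) * gaussianTail x := by
  rcases le_or_gt x 0 with hx | hx
  · exact (mul_nonpos_of_nonpos_of_nonneg hx (exp_pos _).le).trans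
      (mul_pos (by positivity) (gaussianTail_pos x)).le
  obtain ⟨hint, hval⟩ := integral_Ioi_one_add_inv_sq_mul_exp_neg_sq_div_two hx
  have h : exp (-x ^ 2 / 2) / x ≤ (1 + x⁻¹ ^ 2) * gaussianTail x := by
    rw [gaussianTail, ← integral_const_mul, ← hval]
    refine setIntegral_mono_on hint
      (integrable_exp_neg_sq_div_two.integrableOn.const_mul _) measurableSet_Ioi fun u hu => ?_
    have hu0 : 0 < u := hx.trans hu
    gcongr
    exact le_of_lt hu
  calc x * exp (-x ^ 2 / 2) = x ^ 2 * (exp (-x ^ 2 / 2) / x) := by field_simp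
    _ ≤ x ^ 2 * ((1 + x⁻¹ ^ 2) * gaussianTail x) := by gcongr
    _ = (1 + x ^ 2) * gaussianTail x := by field_simp; ring

/-- Mills' ratio `Q x / φ x` for the standard normal density `φ`; the factors `√(2π)` cancel. -/
noncomputable def millsRatio (x : ℝ) : ℝ := exp (x ^ 2 / 2) * gaussianTail x

lemma exp_sq_div_two_mul_exp_neg (x : ℝ) : exp (x ^ 2 / 2) * exp (-x ^ 2 / 2) = 1 := by
  rw [← exp_add, neg_div, add_neg_cancel, exp_zero]

lemma millsRatio_pos (x : ℝ) : 0 < millsRatio x := mul_pos (exp_pos _) (gaussianTail_pos x)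

lemma mul_millsRatio_le_one (x : ℝ) : x * millsRatio x ≤ 1 := by
  rw [millsRatio, mul_left_comm, ← exp_sq_div_two_mul_exp_neg x]
  exact mul_le_mul_of_nonneg_left (mul_gaussianTail_le x) (exp_pos _).le

lemma hasDerivAt_millsRatio (x : ℝ) : HasDerivAt millsRatio (x * millsRatio x - 1) x := by
  have hexp : HasDerivAt (fun x : ℝ => exp (x ^ 2 / 2)) (x * exp (x ^ 2 / 2)) x :=
    ((hasDerivAt_pow 2 x).div_const 2).exp.congr_deriv (by ring)
  refine (hexp.mul (hasDerivAt_gaussianTail x)).congr_deriv ?_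
  rw [millsRatio, mul_neg, exp_sq_div_two_mul_exp_neg]
  ring

lemma monotone_mul_millsRatio : Monotone fun x => x * millsRatio x := by
  refine monotone_of_hasDerivAt_nonneg (fun x => (hasDerivAt_id x).mul (hasDerivAt_millsRatio x))
    fun x => ?_
  have h := mul_le_mul_of_nonneg_left (mul_exp_le_one_add_sq_mul_gaussianTail x)
    (exp_pos (x ^ 2 / 2)).le
  rw [mul_left_comm, exp_sq_div_two_mul_exp_neg, mul_one, mul_left_comm, ← millsRatio] at h
  simp only [id, Pi.zero_apply, one_mul]
  linarith

lemma exp_neg_sq_div_two_div_Q (x : ℝ) :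
    exp (-x ^ 2 / 2) / Q x = √(2 * π) / millsRatio x := by
  rw [← mul_div_mul_left _ _ (exp_pos (x ^ 2 / 2)).ne', exp_sq_div_two_mul_exp_neg, Q, millsRatio,
    gaussianTail]
  field_simp

lemma mul_Q_div_sqrt_two_pi (g : ℝ) :
    g * Q (g / √(2 * π)) =
      g / √(2 * π) * millsRatio (g / √(2 * π)) * exp (-g ^ 2 / (4 * π)) := by
  obtain ⟨y, rfl⟩ : ∃ y, g = √(2 * π) * y := ⟨g / √(2 * π), by field_simp⟩
  have hexp : -(√(2 * π) * y) ^ 2 / (4 * π) = -y ^ 2 / 2 := by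
    rw [mul_pow, sq_sqrt (by positivity)]
    field_simp
    ring
  rw [mul_div_cancel_left₀ y (by positivity), hexp, mul_comm _ y, mul_assoc, sqrt_two_pi_mul_Q,
    millsRatio]
  linear_combination -(y * gaussianTail y) * exp_sq_div_two_mul_exp_neg y

theorem stmt_11_general (ε g₀ : ℝ) (hε1 : ε < 1)
    (hg₀eq : g₀ * Q (g₀ / Real.sqrt (2*π)) = (1 - ε) * Real.exp (-g₀^2/(4*π))) :
    ∀ x : ℝ, g₀ / Real.sqrt (2*π) ≤ x →
      Real.sqrt (2*π) * x ≤ Real.exp (-x^2/2) / Q x ∧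
      Real.exp (-x^2/2) / Q x ≤ Real.sqrt (2*π) * x / (1 - ε) := by
  intro x hx
  have hM := millsRatio_pos x
  have hc : 0 < √(2 * π) := by positivity
  have h₀ : g₀ / √(2 * π) * millsRatio (g₀ / √(2 * π)) = 1 - ε := by
    rw [mul_Q_div_sqrt_two_pi] at hg₀eq
    exact mul_right_cancel₀ (exp_pos _).ne' hg₀eq
  have hlower : 1 - ε ≤ x * millsRatio x := h₀ ▸ monotone_mul_millsRatio hx
  have hupper := mul_millsRatio_le_one x
  rw [exp_neg_sq_div_two_div_Q]
  constructor
  · rw [le_div_iff₀ hM, mul_assoc]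
    exact mul_le_of_le_one_right hc.le hupper
  · rw [div_le_div_iff₀ hM (sub_pos.2 hε1), mul_assoc]
    exact mul_le_mul_of_nonneg_left hlower hc.le

theorem stmt_11 (ε g₀ : ℝ) (hε0 : 0 < ε) (hε1 : ε < 1) (hg₀ : 0 < g₀)
    (hg₀eq : g₀ * Q (g₀ / Real.sqrt (2*π)) = (1 - ε) * Real.exp (-g₀^2/(4*π)))
    (hg₀uniq : ∀ g' : ℝ, 0 < g' →
      g' * Q (g' / Real.sqrt (2*π)) = (1 - ε) * Real.exp (-g'^2/(4*π)) → g' = g₀) :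
    ∀ x : ℝ, g₀ / Real.sqrt (2*π) ≤ x →
      Real.sqrt (2*π) * x ≤ Real.exp (-x^2/2) / Q x ∧
      Real.exp (-x^2/2) / Q x ≤ Real.sqrt (2*π) * x / (1 - ε) :=
  stmt_11_general ε g₀ hε1 hg₀eq
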